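/- Second-moment ODE from the transform PDE: under the stated hypotheses, the map z_2(t) := ∇²_θ Ξ(0, t) ∈ ℝ^{dL²} satisfies z_2'(t) = (Λ ⊗ I_{L²}) ∇²B(0) π(t) + ( (Q^T ⊗ I_{L²}) − ( (K_{d,L} ⊗ I_L) K_{L,dL} + I_{dL²} ) (R^T ⊗ I_L) ) z_2(t) + ( ( (Λ ⊗ I_L) ∇B(0) ) ⊗ I_L ) z_1(t) + (K_{d,L} ⊗ I_L) K_{L,dL} ( ( (Λ ⊗ I_L) ∇B(0) ) ⊗ I_L ) z_1(t), where z_1(t) := ∇_θ Ξ(0, t), π(t) := Ξ(0, t), and K_{m,n} := Σ_{i=1}^m Σ_{j=1}^n ( H_{ij} ⊗ H_{ij}^T ) is the commutation matrix, H_{ij} ∈ ℝ^{m×n} having a 1 in position (i,j) and zeros elsewhere. -/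

import Mathlib

/-!
Write `u_j(θ, t) = Ξ(θ, t)_j`. As `Ξ` is `C³`, `∂_t` commutes with `∂_{θ_k} ∂_{θ_l}`, and for
`t ≥ 0` the PDE identifies `∂_t u_j(·, t)` with its right-hand side, so `z₂'(t)` is the second
`θ`-derivative at `θ = 0` of that right-hand side. Since `β_j - 1` and `θ` vanish at `θ = 0`, the
product rule leaves
`λ_j (∂_k∂_l β_j π_j + ∂_k β_j ∂_l u_j + ∂_l β_j ∂_k u_j) + ∑_i Q_{ij} ∂_k∂_l u_i
  - ∑_{k'} (R_j)_{k'k} ∂_l∂_{k'} u_j - ∑_{k'} (R_j)_{k'l} ∂_k∂_{k'} u_j`,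
and `(K_{d,L} ⊗ I_L) K_{L,dL}` is the permutation exchanging the two derivative indices, which
produces the terms with `k` and `l` exchanged.
-/

open Matrix
open scoped Kronecker

noncomputable section

/-- The stacked-gradient operator on matrix-valued maps: for `f : ℝ^L → ℝ^{n₁×n₂}`, `∇f` is the
`(n₁ × L) × n₂` matrix whose row `(i, k)` and column `j` entry is `∂f_{ij}/∂θ_k`. -/
def mgrad {L : ℕ} {n₁ n₂ : Type*} (f : (Fin L → ℝ) → Matrix n₁ n₂ ℝ)
    (θ : Fin L → ℝ) : Matrix (n₁ × Fin L) n₂ ℝ :=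
  Matrix.of fun ik j => fderiv ℝ (fun x => f x ik.1 j) θ (Pi.single ik.2 1)

/-- The matrix `I_d ⊗ θᵀ : ℝ^{d × dL}`. -/
def idKronRowVec (d : ℕ) {L : ℕ} (θ : Fin L → ℝ) : Matrix (Fin d) (Fin d × Fin L) ℝ :=
  Matrix.of fun j p => if j = p.1 then θ p.2 else 0

/-- The commutation matrix `K_{m,n} = ∑_i ∑_j H_{ij} ⊗ H_{ij}ᵀ`. -/
def commMat (m n : Type*) [Fintype m] [Fintype n] [DecidableEq m] [DecidableEq n] :
    Matrix (m × n) (n × m) ℝ :=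
  ∑ i : m, ∑ j : n,
    (Matrix.single i j (1 : ℝ)) ⊗ₖ (Matrix.single i j (1 : ℝ))ᵀ

section DirectionalDerivative

variable {E : Type*} [NormedAddCommGroup E] [NormedSpace ℝ E]

def dirDeriv (v : E) (f : E → ℝ) : E → ℝ := fun x => fderiv ℝ f x v

variable {f g : E → ℝ} {n m : WithTop ℕ∞}

theorem ContDiff.dirDeriv (hf : ContDiff ℝ n f) (hmn : m + 1 ≤ n) (v : E) :
    ContDiff ℝ m (dirDeriv v f) :=
  (ContinuousLinearMap.apply ℝ ℝ v).contDiff.comp (hf.fderiv_right hmn)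

theorem dirDeriv_dirDeriv_apply (hf : ContDiff ℝ 2 f) (v w x : E) :
    dirDeriv w (dirDeriv v f) x = fderiv ℝ (fderiv ℝ f) x w v := by
  have hd : DifferentiableAt ℝ (fderiv ℝ f) x :=
    (hf.fderiv_right (m := 1) (by norm_num)).differentiable (by norm_num) x
  show fderiv ℝ (fun y => fderiv ℝ f y v) x w = _
  simp [fderiv_clm_apply hd (differentiableAt_const v)]

theorem dirDeriv_comm (hf : ContDiff ℝ 2 f) (v w : E) :
    dirDeriv w (dirDeriv v f) = dirDeriv v (dirDeriv w f) := by
  funext x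
  rw [dirDeriv_dirDeriv_apply hf, dirDeriv_dirDeriv_apply hf,
    (hf.contDiffAt.isSymmSndFDerivAt (by simp)) w v]

theorem dirDeriv_fun_add (hf : Differentiable ℝ f) (hg : Differentiable ℝ g) (v : E) :
    dirDeriv v (fun x => f x + g x) = fun x => dirDeriv v f x + dirDeriv v g x := by
  funext x; simp [dirDeriv, fderiv_fun_add (hf x) (hg x)]

theorem dirDeriv_fun_sub (hf : Differentiable ℝ f) (hg : Differentiable ℝ g) (v : E) :
    dirDeriv v (fun x => f x - g x) = fun x => dirDeriv v f x - dirDeriv v g x := by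
  funext x; simp [dirDeriv, fderiv_fun_sub (hf x) (hg x)]

theorem dirDeriv_fun_mul (hf : Differentiable ℝ f) (hg : Differentiable ℝ g) (v : E) :
    dirDeriv v (fun x => f x * g x) = fun x => dirDeriv v f x * g x + f x * dirDeriv v g x := by
  funext x; simp [dirDeriv, fderiv_fun_mul (hf x) (hg x)]; ring

theorem dirDeriv_const (c : ℝ) (v : E) : dirDeriv v (fun _ : E => c) = fun _ => 0 := by
  funext x; simp [dirDeriv]

theorem dirDeriv_fun_sum {ι : Type*} (s : Finset ι) {F : ι → E → ℝ}
    (hF : ∀ i ∈ s, Differentiable ℝ (F i)) (v : E) :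
    dirDeriv v (fun x => ∑ i ∈ s, F i x) = fun x => ∑ i ∈ s, dirDeriv v (F i) x := by
  funext x; simp [dirDeriv, fderiv_fun_sum fun i hi => hF i hi x]

theorem dirDeriv_ite_zero (p : Prop) [Decidable p] (v : E) :
    dirDeriv v (fun x => if p then f x else 0) = fun x => if p then dirDeriv v f x else 0 := by
  funext x
  by_cases hp : p <;> simp [hp, dirDeriv]

end DirectionalDerivative

theorem dirDeriv_apply_coord {ι : Type*} [Fintype ι] (i : ι) (v : ι → ℝ) :
    dirDeriv v (fun x : ι → ℝ => x i) = fun _ => v i := by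
  funext x; simp [dirDeriv, fderiv_apply]

section Slices

variable {E : Type*} [NormedAddCommGroup E] [NormedSpace ℝ E] {F : E × ℝ → ℝ}

theorem dirDeriv_slice (hF : Differentiable ℝ F) (v : E) (t : ℝ) :
    dirDeriv v (fun x => F (x, t)) = fun x => dirDeriv (v, 0) F (x, t) := by
  funext x
  have h : HasFDerivAt (fun y : E => F (y, t))
      ((fderiv ℝ F (x, t)).comp ((ContinuousLinearMap.id ℝ E).prod 0)) x :=
    (hF (x, t)).hasFDerivAt.comp x ((hasFDerivAt_id x).prodMk (hasFDerivAt_const t x))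
  simp [dirDeriv, h.fderiv]

theorem hasDerivAt_slice (hF : Differentiable ℝ F) (x : E) (s : ℝ) :
    HasDerivAt (fun t => F (x, t)) (dirDeriv (0, 1) F (x, s)) s :=
  (hF (x, s)).hasFDerivAt.comp_hasDerivAt s ((hasDerivAt_const s x).prodMk (hasDerivAt_id s))

theorem hasDerivAt_dirDeriv_dirDeriv_slice (hF : ContDiff ℝ 3 F) (v w x : E) (s : ℝ) :
    HasDerivAt (fun t => dirDeriv w (dirDeriv v (fun y => F (y, t))) x)
      (dirDeriv w (dirDeriv v (fun y => deriv (fun t => F (y, t)) s)) x) s := by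
  have hF2 : ContDiff ℝ 2 F := hF.of_le (by norm_num)
  have hF1 : Differentiable ℝ F := hF.differentiable (by norm_num)
  have hDF : ContDiff ℝ 2 (dirDeriv (v, 0) F) := hF.dirDeriv (by norm_num) _
  have hDF1 : Differentiable ℝ (dirDeriv (v, 0) F) := hDF.differentiable (by norm_num)
  have hDDF : Differentiable ℝ (dirDeriv (w, 0) (dirDeriv (v, 0) F)) :=
    (hDF.dirDeriv (m := 1) (by norm_num) _).differentiable (by norm_num)
  have hDtF : ContDiff ℝ 2 (dirDeriv (0, 1) F) := hF.dirDeriv (by norm_num) _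
  have hderiv : (fun y => deriv (fun t => F (y, t)) s) = fun y => dirDeriv (0, 1) F (y, s) :=
    funext fun y => (hasDerivAt_slice hF1 y s).deriv
  simp only [hderiv, dirDeriv_slice hF1, dirDeriv_slice hDF1,
    dirDeriv_slice (hDtF.differentiable (by norm_num)),
    dirDeriv_slice ((hDtF.dirDeriv (m := 1) (by norm_num) _).differentiable (by norm_num))]
  rw [dirDeriv_comm hF2 (0, 1), dirDeriv_comm hDF (0, 1)]
  exact hasDerivAt_slice hDDF x s

end Slices

theorem commMat_apply {m n : Type*} [Fintype m] [Fintype n] [DecidableEq m] [DecidableEq n]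
    (a e : m) (b c : n) :
    commMat m n (a, b) (c, e) = if a = e ∧ b = c then 1 else 0 := by
  simp [commMat, Matrix.sum_apply, Matrix.single_apply, ite_and, eq_comm]

theorem commMat_mulVec {m n : Type*} [Fintype m] [Fintype n] [DecidableEq m] [DecidableEq n]
    (x : n × m → ℝ) : commMat m n *ᵥ x = fun p => x (p.2, p.1) := by
  funext ⟨a, b⟩
  simp [mulVec, dotProduct, Fintype.sum_prod_type, commMat_apply, ite_and]

theorem kronecker_one_mulVec_apply {l m n : Type*} [Fintype m] [Fintype n] [DecidableEq n]
    (A : Matrix l m ℝ) (y : m × n → ℝ) (i : l) (k : n) :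
    ((A ⊗ₖ (1 : Matrix n n ℝ)) *ᵥ y) (i, k) = (A *ᵥ fun c => y (c, k)) i := by
  simp [mulVec, dotProduct, Fintype.sum_prod_type, one_apply]

theorem commMat_kronecker_one_mul_commMat_mulVec {d L : ℕ}
    (x : (Fin d × Fin L) × Fin L → ℝ) (j : Fin d) (k l : Fin L) :
    (((commMat (Fin d) (Fin L) ⊗ₖ (1 : Matrix (Fin L) (Fin L) ℝ))
      * (Matrix.reindex (Equiv.prodAssoc (Fin L) (Fin d) (Fin L)).symm (Equiv.refl _)
          (commMat (Fin L) (Fin d × Fin L)))) *ᵥ x) ((j, k), l) = x ((j, l), k) := by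
  rw [← mulVec_mulVec, kronecker_one_mulVec_apply, commMat_mulVec, reindex_apply,
    submatrix_mulVec_equiv, commMat_mulVec]
  rfl

theorem idKronRowVec_mulVec_apply {d L : ℕ} (θ : Fin L → ℝ) (y : Fin d × Fin L → ℝ)
    (j : Fin d) :
    (idKronRowVec d θ *ᵥ y) j = ∑ m, θ m * y (j, m) := by
  simp [idKronRowVec, mulVec, dotProduct, Fintype.sum_prod_type, ite_mul]

theorem blockDiag_transpose_mulVec_apply {d L : ℕ} (Rb : Fin d → Matrix (Fin L) (Fin L) ℝ)
    (y : Fin d × Fin L → ℝ) (i : Fin d) (m : Fin L) :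
    ((Matrix.of fun p q : Fin d × Fin L => if p.1 = q.1 then Rb p.1 p.2 q.2 else 0)ᵀ *ᵥ y) (i, m)
      = ∑ k, Rb i k m * y (i, k) := by
  simp [mulVec, dotProduct, Fintype.sum_prod_type, ite_mul, eq_comm]

theorem mgrad_diagonal_apply {d L : ℕ} (β : Fin d → (Fin L → ℝ) → ℝ) (θ : Fin L → ℝ)
    (i j : Fin d) (k : Fin L) :
    mgrad (fun θ => diagonal fun j => β j θ) θ (i, k) j
      = if i = j then dirDeriv (Pi.single k 1) (β i) θ else 0 := by
  show dirDeriv (Pi.single k 1) (fun x => diagonal (fun j => β j x) i j) θ = _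
  simp only [diagonal_apply, dirDeriv_ite_zero]

theorem mgrad_mgrad_diagonal_apply {d L : ℕ} (β : Fin d → (Fin L → ℝ) → ℝ) (θ : Fin L → ℝ)
    (i j : Fin d) (k l : Fin L) :
    mgrad (fun θ => mgrad (fun θ => diagonal fun j => β j θ) θ) θ ((i, k), l) j
      = if i = j then dirDeriv (Pi.single l 1) (dirDeriv (Pi.single k 1) (β i)) θ else 0 := by
  show dirDeriv (Pi.single l 1)
    (fun x => mgrad (fun θ => diagonal fun j => β j θ) x (i, k) j) θ = _
  simp only [mgrad_diagonal_apply, dirDeriv_ite_zero]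

/-- The `j`-th component of the right-hand side of the PDE at a fixed time, `u i` standing for the
`i`-th component of `Ξ(·, t)`. -/
def pdeRHS {d L : ℕ} (lam : Fin d → ℝ) (Q : Matrix (Fin d) (Fin d) ℝ)
    (β : Fin d → (Fin L → ℝ) → ℝ) (Rb : Fin d → Matrix (Fin L) (Fin L) ℝ)
    (u : Fin d → (Fin L → ℝ) → ℝ) (j : Fin d) : (Fin L → ℝ) → ℝ := fun θ =>
  lam j * ((β j θ - 1) * u j θ) + ∑ i, Q i j * u i θ
    - ∑ m, θ m * ∑ k, Rb j k m * dirDeriv (Pi.single k 1) (u j) θ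

theorem pde_rhs_apply {d L : ℕ} {lam : Fin d → ℝ} {β : Fin d → (Fin L → ℝ) → ℝ}
    {Rb : Fin d → Matrix (Fin L) (Fin L) ℝ} {Λ : Matrix (Fin d) (Fin d) ℝ}
    (hΛ : Λ = Matrix.diagonal lam) {Bm : (Fin L → ℝ) → Matrix (Fin d) (Fin d) ℝ}
    (hBm : Bm = fun θ => Matrix.diagonal fun j => β j θ)
    {R : Matrix (Fin d × Fin L) (Fin d × Fin L) ℝ}
    (hR : R = Matrix.of fun p q => if p.1 = q.1 then Rb p.1 p.2 q.2 else 0)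
    (Q : Matrix (Fin d) (Fin d) ℝ) (u : Fin d → (Fin L → ℝ) → ℝ) (θ : Fin L → ℝ) (j : Fin d) :
    ((Λ * (Bm θ - 1)) *ᵥ (fun i => u i θ) + Qᵀ *ᵥ (fun i => u i θ)
      - idKronRowVec d θ *ᵥ (Rᵀ *ᵥ fun p => dirDeriv (Pi.single p.2 1) (u p.1) θ) : Fin d → ℝ) j
      = pdeRHS lam Q β Rb u j θ := by
  subst hΛ hBm hR
  simp only [Pi.add_apply, Pi.sub_apply, idKronRowVec_mulVec_apply,
    blockDiag_transpose_mulVec_apply]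
  simp only [← diagonal_one, diagonal_sub, diagonal_mul_diagonal, mulVec_diagonal]
  simp only [mulVec, dotProduct, transpose_apply, pdeRHS]
  ring

theorem dirDeriv_dirDeriv_pdeRHS_zero {d L : ℕ} (lam : Fin d → ℝ) (Q : Matrix (Fin d) (Fin d) ℝ)
    {β : Fin d → (Fin L → ℝ) → ℝ} (Rb : Fin d → Matrix (Fin L) (Fin L) ℝ)
    {u : Fin d → (Fin L → ℝ) → ℝ} {j : Fin d} (hβ : ContDiff ℝ 2 (β j)) (hβ0 : β j 0 = 1)
    (hu : ∀ i, ContDiff ℝ 3 (u i)) (k l : Fin L) :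
    dirDeriv (Pi.single l 1) (dirDeriv (Pi.single k 1) (pdeRHS lam Q β Rb u j)) 0
      = lam j * (dirDeriv (Pi.single l 1) (dirDeriv (Pi.single k 1) (β j)) 0 * u j 0
          + dirDeriv (Pi.single k 1) (β j) 0 * dirDeriv (Pi.single l 1) (u j) 0
          + dirDeriv (Pi.single l 1) (β j) 0 * dirDeriv (Pi.single k 1) (u j) 0)
        + ∑ i, Q i j * dirDeriv (Pi.single l 1) (dirDeriv (Pi.single k 1) (u i)) 0
        - ∑ k', Rb j k' k * dirDeriv (Pi.single l 1) (dirDeriv (Pi.single k' 1) (u j)) 0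
        - ∑ k', Rb j k' l * dirDeriv (Pi.single k 1) (dirDeriv (Pi.single k' 1) (u j)) 0 := by
  have hβ1 : Differentiable ℝ (β j) := hβ.differentiable (by norm_num)
  have hDβ : ∀ v, Differentiable ℝ (dirDeriv v (β j)) := fun v =>
    (hβ.dirDeriv (m := 1) (by norm_num) v).differentiable (by norm_num)
  have hu1 : ∀ i, Differentiable ℝ (u i) := fun i => (hu i).differentiable (by norm_num)
  have hDu : ∀ i v, ContDiff ℝ 2 (dirDeriv v (u i)) := fun i v => (hu i).dirDeriv (by norm_num) v
  have hDu1 : ∀ i v, Differentiable ℝ (dirDeriv v (u i)) := fun i v =>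
    (hDu i v).differentiable (by norm_num)
  have hDDu : ∀ i v w, Differentiable ℝ (dirDeriv w (dirDeriv v (u i))) := fun i v w =>
    ((hDu i v).dirDeriv (m := 1) (by norm_num) w).differentiable (by norm_num)
  unfold pdeRHS
  simp (disch := fun_prop) only [dirDeriv_fun_add, dirDeriv_fun_sub, dirDeriv_fun_mul,
    dirDeriv_fun_sum, dirDeriv_const, dirDeriv_apply_coord]
  simp only [hβ0, sub_self, zero_mul, mul_zero, sub_zero, add_zero, zero_add, Pi.single_apply,
    ite_mul, one_mul, Pi.zero_apply, Finset.sum_add_distrib, Finset.sum_ite_eq', Finset.mem_univ,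
    if_true]
  ring

theorem second_moment_rhs_apply {d L : ℕ} {lam : Fin d → ℝ} {β : Fin d → (Fin L → ℝ) → ℝ}
    {Rb : Fin d → Matrix (Fin L) (Fin L) ℝ} {Λ : Matrix (Fin d) (Fin d) ℝ}
    (hΛ : Λ = Matrix.diagonal lam) {Bm : (Fin L → ℝ) → Matrix (Fin d) (Fin d) ℝ}
    (hBm : Bm = fun θ => Matrix.diagonal fun j => β j θ)
    {R : Matrix (Fin d × Fin L) (Fin d × Fin L) ℝ}
    (hR : R = Matrix.of fun p q => if p.1 = q.1 then Rb p.1 p.2 q.2 else 0)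
    {KK : Matrix ((Fin d × Fin L) × Fin L) ((Fin d × Fin L) × Fin L) ℝ}
    (hKK : ∀ x j k l, (KK *ᵥ x) ((j, k), l) = x ((j, l), k))
    (Q : Matrix (Fin d) (Fin d) ℝ) (π : Fin d → ℝ) (z₁ : Fin d × Fin L → ℝ)
    (z₂ : (Fin d × Fin L) × Fin L → ℝ) (j : Fin d) (k l : Fin L) :
    ((((Λ ⊗ₖ (1 : Matrix (Fin L) (Fin L) ℝ)) ⊗ₖ (1 : Matrix (Fin L) (Fin L) ℝ))
        * mgrad (fun θ => mgrad Bm θ) 0) *ᵥ π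
      + (((Qᵀ ⊗ₖ (1 : Matrix (Fin L) (Fin L) ℝ)) ⊗ₖ (1 : Matrix (Fin L) (Fin L) ℝ))
          - (KK + 1) * (Rᵀ ⊗ₖ (1 : Matrix (Fin L) (Fin L) ℝ))) *ᵥ z₂
      + ((((Λ ⊗ₖ (1 : Matrix (Fin L) (Fin L) ℝ)) * mgrad Bm 0)
          ⊗ₖ (1 : Matrix (Fin L) (Fin L) ℝ)) *ᵥ z₁)
      + ((KK * (((Λ ⊗ₖ (1 : Matrix (Fin L) (Fin L) ℝ)) * mgrad Bm 0)
          ⊗ₖ (1 : Matrix (Fin L) (Fin L) ℝ))) *ᵥ z₁)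
      : (Fin d × Fin L) × Fin L → ℝ) ((j, k), l)
      = lam j * (dirDeriv (Pi.single l 1) (dirDeriv (Pi.single k 1) (β j)) 0 * π j
          + dirDeriv (Pi.single k 1) (β j) 0 * z₁ (j, l)
          + dirDeriv (Pi.single l 1) (β j) 0 * z₁ (j, k))
        + ∑ i, Q i j * z₂ ((i, k), l) - ∑ k', Rb j k' k * z₂ ((j, k'), l)
        - ∑ k', Rb j k' l * z₂ ((j, k'), k) := by
  subst hΛ hBm hR
  simp only [add_mulVec, sub_mulVec, ← mulVec_mulVec, Pi.add_apply, Pi.sub_apply, one_mulVec,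
    hKK, kronecker_one_mulVec_apply, blockDiag_transpose_mulVec_apply]
  simp only [mulVec, dotProduct, diagonal_apply, mgrad_mgrad_diagonal_apply, ite_mul, zero_mul,
    Finset.sum_ite_eq, Finset.mem_univ, if_true, transpose_apply, mgrad_diagonal_apply]
  ring

theorem second_moment_ode_general {d L : ℕ}
    (Q : Matrix (Fin d) (Fin d) ℝ)
    (lam : Fin d → ℝ)
    (β : Fin d → (Fin L → ℝ) → ℝ)
    (hβ : ∀ j, ContDiff ℝ 3 (β j)) (hβ0 : ∀ j, β j 0 = 1)
    (Λ : Matrix (Fin d) (Fin d) ℝ) (hΛ : Λ = Matrix.diagonal lam)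
    (Bm : (Fin L → ℝ) → Matrix (Fin d) (Fin d) ℝ)
    (hBm : Bm = fun θ => Matrix.diagonal fun j => β j θ)
    (Rb : Fin d → Matrix (Fin L) (Fin L) ℝ)
    (R : Matrix (Fin d × Fin L) (Fin d × Fin L) ℝ)
    (hR : R = Matrix.of fun p q => if p.1 = q.1 then Rb p.1 p.2 q.2 else 0)
    (Ξ : (Fin L → ℝ) → ℝ → Fin d → ℝ)
    (hΞ : ContDiff ℝ 3 fun p : (Fin L → ℝ) × ℝ => Ξ p.1 p.2)
    (gradΞ : (Fin L → ℝ) → ℝ → Fin d × Fin L → ℝ)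
    (hgradΞ : gradΞ = fun θ s p => fderiv ℝ (fun x => Ξ x s p.1) θ (Pi.single p.2 1))
    (hPDE : ∀ θ : Fin L → ℝ, ∀ s ∈ Set.Ici (0 : ℝ),
      HasDerivWithinAt (fun u => Ξ θ u)
        ((Λ * (Bm θ - 1)) *ᵥ Ξ θ s + Qᵀ *ᵥ Ξ θ s
          - idKronRowVec d θ *ᵥ (Rᵀ *ᵥ gradΞ θ s))
        (Set.Ici 0) s)
    (z₁ : ℝ → Fin d × Fin L → ℝ) (hz₁ : z₁ = fun s => gradΞ 0 s)
    (z₂ : ℝ → (Fin d × Fin L) × Fin L → ℝ)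
    (hz₂ : z₂ = fun s p =>
      fderiv ℝ (fun θ => fderiv ℝ (fun x => Ξ x s p.1.1) θ (Pi.single p.1.2 1)) 0
        (Pi.single p.2 1))
    -- `(K_{d,L} ⊗ I_L) K_{L,dL}` (with the canonical associativity identification of the
    -- row index of `K_{L,dL}`)
    (KK : Matrix ((Fin d × Fin L) × Fin L) ((Fin d × Fin L) × Fin L) ℝ)
    (hKK : KK = (commMat (Fin d) (Fin L) ⊗ₖ (1 : Matrix (Fin L) (Fin L) ℝ))
      * (Matrix.reindex (Equiv.prodAssoc (Fin L) (Fin d) (Fin L)).symm (Equiv.refl _)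
          (commMat (Fin L) (Fin d × Fin L)))) :
    ∀ s ∈ Set.Ici (0 : ℝ),
      HasDerivWithinAt z₂
        ((((Λ ⊗ₖ (1 : Matrix (Fin L) (Fin L) ℝ)) ⊗ₖ (1 : Matrix (Fin L) (Fin L) ℝ))
            * mgrad (fun θ => mgrad Bm θ) 0) *ᵥ Ξ 0 s
          + (((Qᵀ ⊗ₖ (1 : Matrix (Fin L) (Fin L) ℝ)) ⊗ₖ (1 : Matrix (Fin L) (Fin L) ℝ))
              - (KK + 1) * (Rᵀ ⊗ₖ (1 : Matrix (Fin L) (Fin L) ℝ))) *ᵥ z₂ s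
          + ((((Λ ⊗ₖ (1 : Matrix (Fin L) (Fin L) ℝ)) * mgrad Bm 0)
              ⊗ₖ (1 : Matrix (Fin L) (Fin L) ℝ)) *ᵥ z₁ s)
          + ((KK * (((Λ ⊗ₖ (1 : Matrix (Fin L) (Fin L) ℝ)) * mgrad Bm 0)
              ⊗ₖ (1 : Matrix (Fin L) (Fin L) ℝ))) *ᵥ z₁ s))
        (Set.Ici 0) s := by
  intro s hs
  subst hgradΞ hz₁ hz₂
  have hKKswap : ∀ x j k l, (KK *ᵥ x) ((j, k), l) = x ((j, l), k) := fun x j k l => by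
    rw [hKK, commMat_kronecker_one_mul_commMat_mulVec]
  refine hasDerivWithinAt_pi.mpr fun ⟨⟨j, k⟩, l⟩ => ?_
  rw [second_moment_rhs_apply hΛ hBm hR hKKswap]
  have hΞj : ∀ i, ContDiff ℝ 3 fun p : (Fin L → ℝ) × ℝ => Ξ p.1 p.2 i := contDiff_pi.mp hΞ
  have hslice : (fun θ => deriv (fun t => Ξ θ t j) s)
      = pdeRHS lam Q β Rb (fun i θ => Ξ θ s i) j := by
    funext θ
    rw [← pde_rhs_apply hΛ hBm hR]
    -- at `s = 0` the PDE is one-sided, but `Ξ` is differentiable across `t = 0`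
    have hdiff : DifferentiableAt ℝ (fun t => Ξ θ t j) s :=
      (hasDerivAt_slice ((hΞj j).differentiable (by norm_num)) θ s).differentiableAt
    exact (uniqueDiffOn_Ici 0 s hs).eq_deriv _ hdiff.hasDerivAt.hasDerivWithinAt
      (hasDerivWithinAt_pi.mp (hPDE θ s hs) j)
  have hΞs : ∀ i, ContDiff ℝ 3 fun θ => Ξ θ s i := fun i =>
    (hΞj i).comp (contDiff_id.prodMk contDiff_const)
  have hderiv := hasDerivAt_dirDeriv_dirDeriv_slice (hΞj j) (Pi.single k 1) (Pi.single l 1) 0 s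
  rw [hslice, dirDeriv_dirDeriv_pdeRHS_zero lam Q Rb ((hβ j).of_le (by norm_num)) (hβ0 j) hΞs]
    at hderiv
  exact hderiv.hasDerivWithinAt

/-- **Second-moment ODE from the transform PDE.** Suppose `Ξ : ℝ^L × [0,∞) → ℝ^d` is `C³` and
satisfies `∂_t Ξ(θ,t) = Λ(B(θ) - I_d)Ξ(θ,t) + Qᵀ Ξ(θ,t) - (I_d ⊗ θᵀ) Rᵀ ∇_θ Ξ(θ,t)`. Then
`z₂(t) := ∇²_θ Ξ(0,t)` satisfies
`z₂'(t) = (Λ ⊗ I_{L²}) ∇²B(0) π(t)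
  + ((Qᵀ ⊗ I_{L²}) - ((K_{d,L} ⊗ I_L) K_{L,dL} + I_{dL²})(Rᵀ ⊗ I_L)) z₂(t)
  + (((Λ ⊗ I_L) ∇B(0)) ⊗ I_L) z₁(t)
  + (K_{d,L} ⊗ I_L) K_{L,dL} (((Λ ⊗ I_L) ∇B(0)) ⊗ I_L) z₁(t)`. -/
theorem second_moment_ode {d L : ℕ}
    (Q : Matrix (Fin d) (Fin d) ℝ)
    (hQoff : ∀ i j, i ≠ j → 0 ≤ Q i j) (hQrow : ∀ i, ∑ j, Q i j = 0)
    (lam : Fin d → ℝ) (hlam : ∀ j, 0 ≤ lam j)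
    (β : Fin d → (Fin L → ℝ) → ℝ)
    (hβ : ∀ j, ContDiff ℝ 3 (β j)) (hβ0 : ∀ j, β j 0 = 1)
    (Λ : Matrix (Fin d) (Fin d) ℝ) (hΛ : Λ = Matrix.diagonal lam)
    (Bm : (Fin L → ℝ) → Matrix (Fin d) (Fin d) ℝ)
    (hBm : Bm = fun θ => Matrix.diagonal fun j => β j θ)
    (Rb : Fin d → Matrix (Fin L) (Fin L) ℝ)
    (R : Matrix (Fin d × Fin L) (Fin d × Fin L) ℝ)
    (hR : R = Matrix.of fun p q => if p.1 = q.1 then Rb p.1 p.2 q.2 else 0)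
    (Ξ : (Fin L → ℝ) → ℝ → Fin d → ℝ)
    (hΞ : ContDiff ℝ 3 fun p : (Fin L → ℝ) × ℝ => Ξ p.1 p.2)
    (gradΞ : (Fin L → ℝ) → ℝ → Fin d × Fin L → ℝ)
    (hgradΞ : gradΞ = fun θ s p => fderiv ℝ (fun x => Ξ x s p.1) θ (Pi.single p.2 1))
    (hPDE : ∀ θ : Fin L → ℝ, ∀ s ∈ Set.Ici (0 : ℝ),
      HasDerivWithinAt (fun u => Ξ θ u)
        ((Λ * (Bm θ - 1)) *ᵥ Ξ θ s + Qᵀ *ᵥ Ξ θ s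
          - idKronRowVec d θ *ᵥ (Rᵀ *ᵥ gradΞ θ s))
        (Set.Ici 0) s)
    (z₁ : ℝ → Fin d × Fin L → ℝ) (hz₁ : z₁ = fun s => gradΞ 0 s)
    (z₂ : ℝ → (Fin d × Fin L) × Fin L → ℝ)
    (hz₂ : z₂ = fun s p =>
      fderiv ℝ (fun θ => fderiv ℝ (fun x => Ξ x s p.1.1) θ (Pi.single p.1.2 1)) 0
        (Pi.single p.2 1))
    -- `(K_{d,L} ⊗ I_L) K_{L,dL}` (with the canonical associativity identification of the
    -- row index of `K_{L,dL}`)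
    (KK : Matrix ((Fin d × Fin L) × Fin L) ((Fin d × Fin L) × Fin L) ℝ)
    (hKK : KK = (commMat (Fin d) (Fin L) ⊗ₖ (1 : Matrix (Fin L) (Fin L) ℝ))
      * (Matrix.reindex (Equiv.prodAssoc (Fin L) (Fin d) (Fin L)).symm (Equiv.refl _)
          (commMat (Fin L) (Fin d × Fin L)))) :
    ∀ s ∈ Set.Ici (0 : ℝ),
      HasDerivWithinAt z₂
        ((((Λ ⊗ₖ (1 : Matrix (Fin L) (Fin L) ℝ)) ⊗ₖ (1 : Matrix (Fin L) (Fin L) ℝ))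
            * mgrad (fun θ => mgrad Bm θ) 0) *ᵥ Ξ 0 s
          + (((Qᵀ ⊗ₖ (1 : Matrix (Fin L) (Fin L) ℝ)) ⊗ₖ (1 : Matrix (Fin L) (Fin L) ℝ))
              - (KK + 1) * (Rᵀ ⊗ₖ (1 : Matrix (Fin L) (Fin L) ℝ))) *ᵥ z₂ s
          + ((((Λ ⊗ₖ (1 : Matrix (Fin L) (Fin L) ℝ)) * mgrad Bm 0)
              ⊗ₖ (1 : Matrix (Fin L) (Fin L) ℝ)) *ᵥ z₁ s)
          + ((KK * (((Λ ⊗ₖ (1 : Matrix (Fin L) (Fin L) ℝ)) * mgrad Bm 0)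
              ⊗ₖ (1 : Matrix (Fin L) (Fin L) ℝ))) *ᵥ z₁ s))
        (Set.Ici 0) s :=
  second_moment_ode_general Q lam β hβ hβ0 Λ hΛ Bm hBm Rb R hR Ξ hΞ gradΞ hgradΞ hPDE z₁ hz₁ z₂ hz₂
    KK hKK

end
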